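/- Let π be a uniformizer of F. Then {π}·{π} = 0 in k^M(F) if and only if q ≡ 1 (mod 4). -/

import Mathlib

/-!
Since `{a}{-a} = 0`, one has `{π}{π} = {π}{-1}`. If `q ≡ 1 (mod 4)` then `-1` is a square in the
residue field, hence in `F` by Newton iteration, and `{-1} = 0`. Conversely, for odd residue
characteristic the Hilbert symbol is given by the tame formula and satisfies the Steinberg
relation; sending `{a}` to a nilpotent `4 × 4` matrix over `𝔽₂` built from `v a` and the square
class of the angular component of `a`, whose pairwise products record the Hilbert symbol in a
corner, defines a ring map out of `k^M(F)`. It sends `{π}{π}` to `(π, π) = (π, -1)`, which is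
nonzero when `-1` is not a square in the residue field, i.e. when `q ≡ 3 (mod 4)`.
-/

/-- A nondyadic `p`-adic field packaged as data: a field `F` of characteristic zero,
complete with respect to a surjective discrete valuation `v : Fˣ → ℤ`, with valuation
ring `O`, residue field `K` (finite of odd cardinality in applications), and residue
(quotient) map `res : O →+* K` whose kernel is the maximal ideal `𝔪 = {x : v x ≥ 1}`. -/
structure PadicData (F K : Type) [Field F] [Field K] where
  v : Fˣ → ℤ
  v_mul : ∀ x y : Fˣ, v (x * y) = v x + v y
  v_surj : Function.Surjective v
  v_ultra : ∀ (x y : Fˣ) (h : (x : F) + (y : F) ≠ 0),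
      min (v x) (v y) ≤ v (Units.mk0 ((x : F) + (y : F)) h)
  O : Subring F
  mem_O : ∀ x : F, x ∈ O ↔ ∀ h : x ≠ 0, 0 ≤ v (Units.mk0 x h)
  res : O →+* K
  res_surj : Function.Surjective res
  res_eq_zero : ∀ x : O, res x = 0 ↔ ∀ h : (x : F) ≠ 0, 1 ≤ v (Units.mk0 (x : F) h)
  complete : ∀ f : ℕ → F,
      (∀ N : ℤ, ∃ M : ℕ, ∀ m, M ≤ m → ∀ n, M ≤ n → ∀ h : f m - f n ≠ 0,
        N ≤ v (Units.mk0 (f m - f n) h)) →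
      ∃ a : F, ∀ N : ℤ, ∃ M : ℕ, ∀ n, M ≤ n → ∀ h : f n - a ≠ 0,
        N ≤ v (Units.mk0 (f n - a) h)
/-- The defining relations of mod 2 Milnor K-theory on the tensor algebra
`T(F^×)` (over `ℤ`, with `F^×` written additively): the Steinberg elements
`{a}·{1−a}` for `a ∈ F^× \ {1}` are set to `0`, and `2·1` is set to `0`.
Quotienting by `MilnorRel` realizes the quotient by the two-sided ideal `J`
generated by these elements. -/
inductive MilnorRel (F : Type) [Field F] :
    TensorAlgebra ℤ (Additive Fˣ) → TensorAlgebra ℤ (Additive Fˣ) → Prop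
  | steinberg (a : Fˣ) (h : (1 : F) - (a : F) ≠ 0) :
      MilnorRel F
        (TensorAlgebra.ι ℤ (Additive.ofMul a) *
          TensorAlgebra.ι ℤ (Additive.ofMul (Units.mk0 ((1 : F) - (a : F)) h))) 0
  | mod2 : MilnorRel F (2 : TensorAlgebra ℤ (Additive Fˣ)) 0

/-- Mod 2 Milnor K-theory `k^M(F) = T(F^×)/J`. -/
abbrev MilnorK (F : Type) [Field F] := RingQuot (MilnorRel F)

/-- The degree-one class `{a}` of `a ∈ F^×` in mod 2 Milnor K-theory. -/
noncomputable def kcls {F : Type} [Field F] (a : Fˣ) : MilnorK F :=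
  RingQuot.mkRingHom (MilnorRel F) (TensorAlgebra.ι ℤ (Additive.ofMul a))

namespace MilnorK

variable {F : Type} [Field F]

theorem two_eq_zero : (2 : MilnorK F) = 0 := by
  have h := RingQuot.mkRingHom_rel (MilnorRel.mod2 (F := F))
  rwa [map_ofNat, map_zero] at h

theorem eq_of_add_eq_zero {x y : MilnorK F} (h : x + y = 0) : x = y := by
  rw [← add_zero x, ← zero_mul y, ← two_eq_zero, two_mul, ← add_assoc, h, zero_add]

theorem kcls_mul (a b : Fˣ) : kcls (a * b) = kcls a + kcls b := by
  simp only [kcls, ofMul_mul, map_add]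

theorem kcls_one : kcls (1 : Fˣ) = (0 : MilnorK F) := by
  simp [kcls]

theorem kcls_inv (a : Fˣ) : kcls a⁻¹ = kcls a :=
  eq_of_add_eq_zero (by rw [← kcls_mul, inv_mul_cancel, kcls_one])

theorem kcls_mul_self (a : Fˣ) : kcls (a * a) = (0 : MilnorK F) := by
  rw [kcls_mul, ← two_mul, two_eq_zero, zero_mul]

theorem kcls_mul_kcls_of_add_eq_one {a b : Fˣ} (hab : (a : F) + b = 1) :
    kcls a * kcls b = 0 := by
  have h : (1 : F) - a ≠ 0 := by simp [← hab]
  obtain rfl : b = Units.mk0 ((1 : F) - a) h := Units.ext (by simp [← hab])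
  simpa [kcls] using RingQuot.mkRingHom_rel (MilnorRel.steinberg a h)

theorem kcls_mul_kcls_neg (a : Fˣ) : kcls a * kcls (-a) = 0 := by
  rcases eq_or_ne a 1 with rfl | ha
  · rw [kcls_one, zero_mul]
  have h₁ : (1 : F) - a ≠ 0 := sub_ne_zero.mpr fun h ↦ ha (Units.val_eq_one.mp h.symm)
  have h₂ : (1 : F) - (a⁻¹ : Fˣ) ≠ 0 :=
    sub_ne_zero.mpr fun h ↦ ha (inv_eq_one.mp (Units.val_eq_one.mp h.symm))
  set b := Units.mk0 _ h₁
  set c := Units.mk0 _ h₂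
  -- `-a = (1 - a) / (1 - a⁻¹)`
  have hneg : -a = b * c⁻¹ := by
    rw [eq_mul_inv_iff_mul_eq]
    ext
    simp only [Units.val_inv_eq_inv_val, neg_mul, Units.val_neg, Units.val_mul, Units.val_mk0, b, c]
    field_simp
    ring
  rw [hneg, kcls_mul, kcls_inv, mul_add, kcls_mul_kcls_of_add_eq_one (b := b) (by simp [b]),
    ← kcls_inv a, kcls_mul_kcls_of_add_eq_one (b := c) (by simp [c]), add_zero]

theorem kcls_mul_kcls_self (a : Fˣ) : kcls a * kcls a = kcls a * kcls (-1 : Fˣ) := by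
  refine eq_of_add_eq_zero ?_
  rw [← mul_add, ← kcls_mul, mul_neg_one, kcls_mul_kcls_neg]

def lift {A : Type*} [Ring A] (ℓ : Additive Fˣ →+ A) (h2 : (2 : A) = 0)
    (hℓ : ∀ a b : Fˣ, (a : F) + b = 1 → ℓ (.ofMul a) * ℓ (.ofMul b) = 0) :
    MilnorK F →+* A :=
  RingQuot.lift ⟨(TensorAlgebra.lift ℤ ℓ.toIntLinearMap).toRingHom, by
    rintro _ _ (⟨a, h⟩ | _)
    · simpa using hℓ a _ (by simp)
    · rw [AlgHom.toRingHom_eq_coe, RingHom.coe_coe, map_ofNat, map_zero]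
      exact h2⟩

theorem lift_kcls {A : Type*} [Ring A] (ℓ : Additive Fˣ →+ A) (h2 : (2 : A) = 0)
    (hℓ : ∀ a b : Fˣ, (a : F) + b = 1 → ℓ (.ofMul a) * ℓ (.ofMul b) = 0) (a : Fˣ) :
    lift ℓ h2 hℓ (kcls a) = ℓ (.ofMul a) := by
  simp [lift, kcls]

end MilnorK

/-- `symbolMatrix ε α c` has first row `(0, xᵀ M, 0)` and last column `(0, x, 0)` for
`x = (α, c)` and `M = !![ε, 1; 1, 0]`, so that a product of two of them is `xᵀ M y` in the
corner. -/
def symbolMatrix {R : Type*} [CommRing R] (ε α c : R) : Matrix (Fin 4) (Fin 4) R :=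
  !![0, ε * α + c, α, 0; 0, 0, 0, α; 0, 0, 0, c; 0, 0, 0, 0]

section SymbolMatrix

variable {R : Type*} [CommRing R]

theorem symbolMatrix_zero (ε : R) : symbolMatrix ε 0 0 = 0 := by
  ext i j; fin_cases i <;> fin_cases j <;> simp [symbolMatrix]

theorem symbolMatrix_add (ε α β c d : R) :
    symbolMatrix ε (α + β) (c + d) = symbolMatrix ε α c + symbolMatrix ε β d := by
  ext i j; fin_cases i <;> fin_cases j <;> simp [symbolMatrix, mul_add, add_add_add_comm]

theorem symbolMatrix_mul_symbolMatrix (ε α β c d : R) :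
    symbolMatrix ε α c * symbolMatrix ε β d = Matrix.single 0 3 (α * d + c * β + ε * α * β) := by
  ext i j; fin_cases i <;> fin_cases j <;> simp [symbolMatrix, Matrix.mul_apply, Fin.sum_univ_four]
  ring

end SymbolMatrix

def newtonSqrt {F : Type*} [Field F] (u x : F) : F := (x ^ 2 + u) / (2 * x)

section Newton

variable {F : Type*} [Field F] {u x : F}

theorem newtonSqrt_sub (hx : x ≠ 0) (h2 : (2 : F) ≠ 0) :
    newtonSqrt u x - x = -((x ^ 2 - u) / (2 * x)) := by
  unfold newtonSqrt
  field_simp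
  ring

theorem newtonSqrt_sq_sub (hx : x ≠ 0) (h2 : (2 : F) ≠ 0) :
    newtonSqrt u x ^ 2 - u = ((x ^ 2 - u) / (2 * x)) ^ 2 := by
  unfold newtonSqrt
  field_simp
  ring

end Newton

section SquareClass

variable {K : Type*} [Field K] [Fintype K]

open Classical in
noncomputable def sqClass (a : K) : ZMod 2 := if IsSquare a then 0 else 1

theorem sqClass_one : sqClass (1 : K) = 0 := by
  simp [sqClass]

theorem sqClass_mul {a b : K} (ha : a ≠ 0) (hb : b ≠ 0) :
    sqClass (a * b) = sqClass a + sqClass b := by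
  classical
  have key : IsSquare (a * b) ↔ (IsSquare a ↔ IsSquare b) := by
    rw [← quadraticChar_one_iff_isSquare ha, ← quadraticChar_one_iff_isSquare hb,
      ← quadraticChar_one_iff_isSquare (mul_ne_zero ha hb), map_mul]
    rcases quadraticChar_dichotomy ha with h | h <;>
      rcases quadraticChar_dichotomy hb with h' | h' <;> simp [h, h']
  unfold sqClass
  by_cases hA : IsSquare a <;> by_cases hB : IsSquare b <;> simp [hA, hB, key]
  decide

end SquareClass

namespace PadicData

variable {F K : Type} [Field F] [Field K] (D : PadicData F K)

theorem v_one : D.v 1 = 0 := by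
  simpa using D.v_mul 1 1

theorem v_inv (u : Fˣ) : D.v u⁻¹ = -D.v u := by
  have := D.v_mul u u⁻¹
  rw [mul_inv_cancel, v_one] at this
  omega

theorem v_zpow (u : Fˣ) (k : ℤ) : D.v (u ^ k) = k * D.v u := by
  induction k using Int.induction_on with
  | zero => simp [v_one]
  | succ k ih => rw [zpow_add_one, v_mul, ih]; ring
  | pred k ih => rw [zpow_sub_one, v_mul, ih, v_inv]; ring

theorem v_neg_one : D.v (-1) = 0 := by
  have := D.v_mul (-1) (-1)
  rw [neg_one_mul, neg_neg, v_one] at this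
  omega

open Classical in
noncomputable def val : AddValuation F (WithTop ℤ) :=
  AddValuation.of (fun x ↦ if h : x = 0 then ⊤ else (D.v (Units.mk0 x h) : WithTop ℤ))
    (dif_pos rfl) (by simp [Units.mk0_one, v_one])
    (fun x y ↦ by
      rcases eq_or_ne x 0 with rfl | hx
      · simp
      rcases eq_or_ne y 0 with rfl | hy
      · simp
      rcases eq_or_ne (x + y) 0 with hxy | hxy
      · simp [hxy]
      simp only [hx, hy, hxy, dite_false]
      exact_mod_cast D.v_ultra (Units.mk0 x hx) (Units.mk0 y hy) hxy)
    (fun x y ↦ by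
      rcases eq_or_ne x 0 with rfl | hx
      · simp
      rcases eq_or_ne y 0 with rfl | hy
      · simp
      simp only [hx, hy, mul_ne_zero hx hy, dite_false, Units.mk0_mul, v_mul, WithTop.coe_add])

theorem val_unit (u : Fˣ) : D.val u = D.v u := by
  simp [val]

theorem val_mk0 {x : F} (hx : x ≠ 0) : D.val x = D.v (Units.mk0 x hx) :=
  D.val_unit (Units.mk0 x hx)

theorem mem_O_iff {x : F} : x ∈ D.O ↔ 0 ≤ D.val x := by
  rw [D.mem_O]
  rcases eq_or_ne x 0 with rfl | hx
  · simp
  · simp [hx, D.val_mk0 hx]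

theorem res_eq_zero_iff (x : D.O) : D.res x = 0 ↔ 1 ≤ D.val x := by
  rw [D.res_eq_zero]
  rcases eq_or_ne (x : F) 0 with hx | hx
  · simp [hx]
  · simp [hx, D.val_mk0 hx]

theorem res_eq_res_of_one_le_val_sub {x y : D.O} (h : 1 ≤ D.val ((x : F) - y)) :
    D.res x = D.res y := by
  rw [← sub_eq_zero, ← map_sub]
  exact (D.res_eq_zero_iff _).mpr h

theorem val_eq_zero_of_res_ne_zero {x : D.O} (h : D.res x ≠ 0) : D.val x = 0 := by
  have h₀ := D.mem_O_iff.mp x.2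
  have h₁ := mt (D.res_eq_zero_iff x).mpr h
  generalize D.val (x : F) = e at h₀ h₁ ⊢
  induction e using WithTop.recTopCoe with
  | top => simp at h₁
  | coe n => norm_cast at h₀ h₁ ⊢; omega

theorem v_eq_of_lt_val_sub {x y : Fˣ} (h : D.val (y : F) < D.val ((x : F) - y)) :
    D.v x = D.v y := by
  have := D.val.map_add_eq_of_lt_left h
  rwa [add_sub_cancel, val_unit, val_unit, WithTop.coe_eq_coe] at this

theorem eq_zero_of_forall_le_val {x : F} (h : ∀ n : ℕ, (n : WithTop ℤ) ≤ D.val x) : x = 0 := by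
  by_contra hx
  have := h ((D.v (Units.mk0 x hx)).toNat + 1)
  rw [D.val_mk0 hx] at this
  norm_cast at this
  omega

theorem exists_limit_of_le_val_succ_sub (f : ℕ → F)
    (hf : ∀ n : ℕ, (n : WithTop ℤ) ≤ D.val (f (n + 1) - f n)) :
    ∃ a, ∀ n : ℕ, (n : WithTop ℤ) ≤ D.val (f n - a) := by
  have hcauchy : ∀ n m : ℕ, n ≤ m → (n : WithTop ℤ) ≤ D.val (f m - f n) := by
    intro n m hnm
    induction m, hnm using Nat.le_induction with
    | base => simp
    | succ m hnm ih =>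
      rw [← sub_add_sub_cancel (f (m + 1)) (f m) (f n)]
      refine le_trans (le_min ?_ ih) (D.val.map_add _ _)
      exact le_trans (by exact_mod_cast hnm) (hf m)
  have hmin : ∀ m n : ℕ, ((min m n : ℕ) : WithTop ℤ) ≤ D.val (f m - f n) := by
    intro m n
    rcases le_total m n with h | h
    · rw [min_eq_left h, D.val.map_sub_swap]; exact hcauchy m n h
    · rw [min_eq_right h]; exact hcauchy n m h
  obtain ⟨a, ha⟩ := D.complete f fun N ↦ ⟨N.toNat, fun m hm n hn h ↦ by
    have : ((min m n : ℕ) : ℤ) ≤ D.v (Units.mk0 _ h) := by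
      have := hmin m n
      rwa [D.val_mk0 h, ← WithTop.coe_natCast, WithTop.coe_le_coe] at this
    omega⟩
  refine ⟨a, fun n ↦ ?_⟩
  obtain ⟨M, hM⟩ := ha n
  rw [← sub_add_sub_cancel (f n) (f (max M n)) a]
  refine le_trans (le_min ?_ ?_) (D.val.map_add _ _)
  · rw [D.val.map_sub_swap]; exact hcauchy n _ (le_max_right M n)
  · rcases eq_or_ne (f (max M n) - a) 0 with h | h
    · simp [h]
    · rw [D.val_mk0 h]; exact_mod_cast hM _ (le_max_left M n) h

theorem val_newtonSqrt_sub (h2 : D.val (2 : F) = 0) {u x : F} (hx : D.val x = 0) :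
    D.val (newtonSqrt u x - x) = D.val (x ^ 2 - u) := by
  have hx' : x ≠ 0 := by rintro rfl; simp at hx
  have h2' : (2 : F) ≠ 0 := by rintro h; simp [h] at h2
  rw [newtonSqrt_sub hx' h2', D.val.map_neg, D.val.map_div, D.val.map_mul, h2, hx, add_zero,
    sub_zero]

theorem val_newtonSqrt_sq_sub (h2 : D.val (2 : F) = 0) {u x : F} (hx : D.val x = 0) :
    D.val (newtonSqrt u x ^ 2 - u) = D.val (x ^ 2 - u) + D.val (x ^ 2 - u) := by
  have hx' : x ≠ 0 := by rintro rfl; simp at hx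
  have h2' : (2 : F) ≠ 0 := by rintro h; simp [h] at h2
  rw [newtonSqrt_sq_sub hx' h2', sq, D.val.map_mul, D.val.map_div, D.val.map_mul, h2, hx, add_zero,
    sub_zero]

theorem newtonSqrt_iterate_spec (h2 : D.val (2 : F) = 0) {u x₀ : F} (hx₀ : D.val x₀ = 0)
    (hu : 1 ≤ D.val (x₀ ^ 2 - u)) (n : ℕ) :
    D.val ((newtonSqrt u)^[n] x₀) = 0 ∧
      ((n + 1 : ℕ) : WithTop ℤ) ≤ D.val (((newtonSqrt u)^[n] x₀) ^ 2 - u) := by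
  induction n with
  | zero => simpa using ⟨hx₀, hu⟩
  | succ n ih =>
    obtain ⟨hx, hn⟩ := ih
    rw [Function.iterate_succ_apply']
    set x := (newtonSqrt u)^[n] x₀
    refine ⟨?_, ?_⟩
    · have hlt : D.val x < D.val (newtonSqrt u x - x) := by
        rw [hx, D.val_newtonSqrt_sub h2 hx]
        exact lt_of_lt_of_le (by norm_cast; omega) hn
      rw [← add_sub_cancel x (newtonSqrt u x), D.val.map_add_eq_of_lt_left hlt, hx]
    · rw [D.val_newtonSqrt_sq_sub h2 hx]
      generalize D.val (x ^ 2 - u) = e at hn ⊢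
      induction e using WithTop.recTopCoe with
      | top => simp
      | coe e => norm_cast at hn ⊢; omega

theorem exists_sq_eq (h2 : D.val (2 : F) = 0) {u x₀ : F} (hx₀ : D.val x₀ = 0)
    (hu : 1 ≤ D.val (x₀ ^ 2 - u)) : ∃ a, a ^ 2 = u := by
  set f := fun n ↦ (newtonSqrt u)^[n] x₀
  have hf := D.newtonSqrt_iterate_spec h2 hx₀ hu
  obtain ⟨a, ha⟩ := D.exists_limit_of_le_val_succ_sub f fun n ↦ by
    rw [show f (n + 1) = newtonSqrt u (f n) from Function.iterate_succ_apply' _ _ _,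
      D.val_newtonSqrt_sub h2 (hf n).1]
    exact le_trans (by norm_cast; omega) (hf n).2
  refine ⟨a, sub_eq_zero.mp (D.eq_zero_of_forall_le_val fun n ↦ ?_)⟩
  have hsum : 0 ≤ D.val (a + f n) := by
    rw [show a + f n = (a - f n) + 2 * f n by ring]
    refine le_trans (le_min ?_ ?_) (D.val.map_add _ _)
    · rw [D.val.map_sub_swap]; exact le_trans (by simp) (ha n)
    · rw [D.val.map_mul, h2, (hf n).1, add_zero]
  rw [show a ^ 2 - u = (a - f n) * (a + f n) + (f n ^ 2 - u) by ring]
  refine le_trans (le_min ?_ ?_) (D.val.map_add _ _)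
  · rw [D.val.map_mul, D.val.map_sub_swap]; exact le_add_of_le_of_nonneg (ha n) hsum
  · exact le_trans (by norm_cast; omega) (hf n).2

theorem isSquare_of_isSquare_res (h2 : (2 : K) ≠ 0) {u : D.O} (hu : D.res u ≠ 0)
    (hsq : IsSquare (D.res u)) : IsSquare (u : F) := by
  obtain ⟨c, hc⟩ := hsq
  obtain ⟨x₀, rfl⟩ := D.res_surj c
  have hval2 : D.val (2 : F) = 0 := by
    exact_mod_cast D.val_eq_zero_of_res_ne_zero (x := 2) (by rwa [map_ofNat])
  have hx₀ : D.val x₀ = 0 := D.val_eq_zero_of_res_ne_zero fun h ↦ hu (by simp [hc, h])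
  have hu' : 1 ≤ D.val ((x₀ : F) ^ 2 - u) := by
    have : D.res (x₀ ^ 2 - u) = 0 := by rw [map_sub, map_pow, hc, sq, sub_self]
    exact_mod_cast (D.res_eq_zero_iff _).mp this
  obtain ⟨a, ha⟩ := D.exists_sq_eq hval2 hx₀ hu'
  exact ⟨a, by rw [← ha, sq]⟩

def unitPart (π x : Fˣ) : Fˣ := x * π ^ (-D.v x)

variable {π : Fˣ} (hπ : D.v π = 1)
include hπ

theorem v_unitPart (x : Fˣ) : D.v (D.unitPart π x) = 0 := by
  rw [unitPart, v_mul, v_zpow, hπ]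
  ring

theorem unitPart_mem (x : Fˣ) : (D.unitPart π x : F) ∈ D.O := by
  rw [mem_O_iff, val_unit, D.v_unitPart hπ]
  rfl

def ac : Fˣ →* K where
  toFun x := D.res ⟨D.unitPart π x, D.unitPart_mem hπ x⟩
  map_one' := by
    simp only [unitPart, v_one, neg_zero, zpow_zero, mul_one]
    exact map_one D.res
  map_mul' x y := by
    rw [← map_mul]
    congr 1
    ext
    simp only [unitPart, v_mul, neg_add_rev, zpow_add, Units.val_mul, MulMemClass.mk_mul_mk]
    ring

theorem ac_ne_zero (x : Fˣ) : D.ac hπ x ≠ 0 := by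
  rw [ac, MonoidHom.coe_mk, OneHom.coe_mk, Ne, res_eq_zero_iff, val_unit, D.v_unitPart hπ]
  simp

theorem ac_neg_one : D.ac hπ (-1) = -1 := by
  rw [← map_one D.res, ← map_neg]
  show D.res _ = _
  congr 1
  ext
  simp [unitPart, v_neg_one]

theorem ac_eq_of_lt_val_sub {x y : Fˣ} (h : D.val (y : F) < D.val ((x : F) - y)) :
    D.ac hπ x = D.ac hπ y := by
  apply D.res_eq_res_of_one_le_val_sub
  have hsub : (D.unitPart π x : F) - D.unitPart π y = ((x : F) - y) * (π ^ (-D.v y) : Fˣ) := by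
    simp only [unitPart, Units.val_mul, D.v_eq_of_lt_val_sub h]
    ring
  rw [hsub, D.val.map_mul, val_unit, v_zpow, hπ, mul_one]
  rw [val_unit] at h
  generalize D.val ((x : F) - y) = e at h ⊢
  induction e using WithTop.recTopCoe with
  | top => simp
  | coe e => norm_cast at h ⊢; omega

variable [Fintype K]

/-- The Hilbert symbol `(a, b)`, written additively: for odd residue characteristic it is the
quadratic character of the tame symbol `(-1)^(v a v b) a^(v b) / b^(v a)` of `a` and `b`. -/
noncomputable def hilbertSymbol (a b : Fˣ) : ZMod 2 :=
  D.v a * sqClass (D.ac hπ b) + sqClass (D.ac hπ a) * D.v b + sqClass (-1 : K) * D.v a * D.v b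

theorem hilbertSymbol_comm (a b : Fˣ) : D.hilbertSymbol hπ a b = D.hilbertSymbol hπ b a := by
  unfold hilbertSymbol
  ring

theorem hilbertSymbol_self_uniformizer : D.hilbertSymbol hπ π π = sqClass (-1 : K) := by
  simp only [hilbertSymbol, hπ, Int.cast_one, one_mul, mul_one]
  generalize sqClass (D.ac hπ π) = c
  generalize sqClass (-1 : K) = ε
  revert c ε
  decide

theorem hilbertSymbol_eq_zero_of_add_eq_one {a b : Fˣ} (hab : (a : F) + b = 1) :
    D.hilbertSymbol hπ a b = 0 := by
  wlog hle : D.v a ≤ D.v b generalizing a b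
  · rw [hilbertSymbol_comm]
    exact this (by rwa [add_comm]) (by omega)
  rcases lt_trichotomy (D.v a) 0 with hneg | hzero | hpos
  · -- `b = 1 - a` has the valuation and the angular component of `-a`
    have h : D.val ((-a : Fˣ) : F) < D.val ((b : F) - (-a : Fˣ)) := by
      rw [Units.val_neg, sub_neg_eq_add, add_comm, hab, D.val.map_one, D.val.map_neg, val_unit]
      exact_mod_cast hneg
    rw [hilbertSymbol, D.v_eq_of_lt_val_sub h, D.ac_eq_of_lt_val_sub hπ h, ← neg_one_mul, v_mul,
      v_neg_one, zero_add, map_mul, ac_neg_one,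
      sqClass_mul (neg_ne_zero.mpr one_ne_zero) (D.ac_ne_zero hπ a)]
    generalize ((D.v a : ℤ) : ZMod 2) = α
    generalize sqClass (D.ac hπ a) = c
    generalize sqClass (-1 : K) = ε
    revert α c ε
    decide
  · rcases hle.lt_or_eq with hlt | heq
    · -- `a = 1 - b` is a principal unit
      have h : D.val ((1 : Fˣ) : F) < D.val ((a : F) - (1 : Fˣ)) := by
        rw [Units.val_one, show (a : F) - 1 = -b by linear_combination hab, D.val.map_neg,
          D.val.map_one, val_unit]
        exact_mod_cast hzero ▸ hlt
      simp [hilbertSymbol, hzero, D.ac_eq_of_lt_val_sub hπ h, sqClass_one]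
    · simp [hilbertSymbol, hzero, ← heq]
  · have h := D.val.map_add (a : F) b
    rw [hab, D.val.map_one, val_unit, val_unit] at h
    have : (0 : WithTop ℤ) < min (D.v a : WithTop ℤ) (D.v b) := by
      rw [lt_min_iff]
      exact ⟨by exact_mod_cast hpos, by exact_mod_cast hpos.trans_le hle⟩
    exact absurd h this.not_ge

noncomputable def symbolMap : Additive Fˣ →+ Matrix (Fin 4) (Fin 4) (ZMod 2) where
  toFun a := symbolMatrix (sqClass (-1 : K)) (D.v a.toMul) (sqClass (D.ac hπ a.toMul))
  map_zero' := by simp [v_one, sqClass_one, symbolMatrix_zero]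
  map_add' a b := by
    simp only [toMul_add, v_mul, map_mul, sqClass_mul (D.ac_ne_zero hπ _) (D.ac_ne_zero hπ _),
      Int.cast_add, symbolMatrix_add]

theorem symbolMap_mul_symbolMap (a b : Fˣ) :
    D.symbolMap hπ (.ofMul a) * D.symbolMap hπ (.ofMul b) =
      Matrix.single 0 3 (D.hilbertSymbol hπ a b) :=
  symbolMatrix_mul_symbolMatrix ..

noncomputable def symbolHom : MilnorK F →+* Matrix (Fin 4) (Fin 4) (ZMod 2) :=
  MilnorK.lift (D.symbolMap hπ) (by ext i j; fin_cases i <;> fin_cases j <;> rfl) fun a b hab ↦ by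
    rw [symbolMap_mul_symbolMap, hilbertSymbol_eq_zero_of_add_eq_one _ _ hab, Matrix.single_zero]

theorem kcls_mul_kcls_self_eq_zero_iff (h2 : (2 : K) ≠ 0) :
    kcls π * kcls π = 0 ↔ IsSquare (-1 : K) := by
  constructor
  · intro h
    have h' := congrArg (fun x ↦ D.symbolHom hπ x 0 3) h
    simp only [map_mul, symbolHom, MilnorK.lift_kcls, symbolMap_mul_symbolMap,
      hilbertSymbol_self_uniformizer, Matrix.single_apply_same, map_zero, Matrix.zero_apply] at h'
    by_contra hK
    simp [sqClass, hK] at h'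
  · intro hK
    obtain ⟨r, hr⟩ := D.isSquare_of_isSquare_res h2 (u := -1) (by simp) (by simpa using hK)
    have hr₀ : r ≠ 0 := by rintro rfl; simp at hr
    have : (-1 : Fˣ) = Units.mk0 r hr₀ * Units.mk0 r hr₀ := by ext; simpa using hr
    rw [MilnorK.kcls_mul_kcls_self, this, MilnorK.kcls_mul_self, mul_zero]

end PadicData

theorem milnor_pi_sq_eq_zero_iff_general {F K : Type} [Field F] [Field K] [Fintype K]
    (D : PadicData F K) (hodd : Odd (Fintype.card K))
    (π : Fˣ) (hπ : D.v π = 1) :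
    kcls π * kcls π = 0 ↔ Fintype.card K % 4 = 1 := by
  have hq := Nat.odd_iff.mp hodd
  have h2 : (2 : K) ≠ 0 := Ring.two_ne_zero fun h ↦ by
    rw [FiniteField.even_card_iff_char_two] at h
    omega
  rw [D.kcls_mul_kcls_self_eq_zero_iff hπ h2, FiniteField.isSquare_neg_one_iff]
  omega

/-- `{π}·{π} = 0` in `k^M(F)` iff `q ≡ 1 (mod 4)`. -/
theorem milnor_pi_sq_eq_zero_iff {F K : Type} [Field F] [CharZero F] [Field K] [Fintype K]
    (D : PadicData F K) (hodd : Odd (Fintype.card K))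
    (π : Fˣ) (hπ : D.v π = 1) :
    kcls π * kcls π = 0 ↔ Fintype.card K % 4 = 1 :=
  milnor_pi_sq_eq_zero_iff_general D hodd π hπ
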